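/- Let w2, w3 be integers with w3 ≥ w2 > 1 and let S_{1,w2,w3} be the explicit finite set of tetrahedra defined in the context. Every tetrahedron T ∈ S_{1,w2,w3} has multi-width exactly (1, w2, w3). -/

import Mathlib

open scoped Pointwise

noncomputable section

/-- Embed an integer lattice point into real space. -/
def intEmbed {d : ℕ} (v : Fin d → ℤ) : Fin d → ℝ := fun i => (v i : ℝ)

/-- Pairing of an integer dual vector with a real point. -/
def dualPair {d : ℕ} (u : Fin d → ℤ) (x : Fin d → ℝ) : ℝ := ∑ i, (u i : ℝ) * x i

/-- The width of a set `P ⊆ ℝ^d` with respect to an integer dual vector `u`: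
`max_{x ∈ P} u·x − min_{x ∈ P} u·x`. -/
def widthIn {d : ℕ} (u : Fin d → ℤ) (P : Set (Fin d → ℝ)) : ℝ :=
  sSup (dualPair u '' P) - sInf (dualPair u '' P)

/-- `w` is a tuple of widths of `P` realized by linearly independent dual vectors. -/
def IsWidthTuple {d : ℕ} (P : Set (Fin d → ℝ)) (w : Fin d → ℝ) : Prop :=
  ∃ u : Fin d → (Fin d → ℤ), LinearIndependent ℤ u ∧ ∀ i, widthIn (u i) P = w i

/-- `w` is the multi-width of `P`: the lexicographically minimal width tuple over
linearly independent tuples of dual vectors. -/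
def IsMultiWidth {d : ℕ} (P : Set (Fin d → ℝ)) (w : Fin d → ℝ) : Prop :=
  IsWidthTuple P w ∧ ∀ w' : Fin d → ℝ, IsWidthTuple P w' → toLex w ≤ toLex w'

/-- The affine map `x ↦ A x + b` on real points, with integral `A` and `b`. -/
def unimodMap {d : ℕ} (A : Matrix (Fin d) (Fin d) ℤ) (b : Fin d → ℤ) (x : Fin d → ℝ) :
    Fin d → ℝ :=
  fun i => (∑ j, (A i j : ℝ) * x j) + (b i : ℝ)

/-- Affine unimodular equivalence of subsets of `ℝ^d`: `Q = A·P + b` with `A ∈ GL_d(ℤ)`,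
`b ∈ ℤ^d`. -/
def AffEquiv {d : ℕ} (P Q : Set (Fin d → ℝ)) : Prop :=
  ∃ A : Matrix (Fin d) (Fin d) ℤ, IsUnit A.det ∧ ∃ b : Fin d → ℤ, Q = unimodMap A b '' P

/-- A lattice polytope: the convex hull of finitely many lattice points. -/
def IsLatticePolytope {d : ℕ} (P : Set (Fin d → ℝ)) : Prop :=
  ∃ V : Finset (Fin d → ℤ), V.Nonempty ∧ P = convexHull ℝ (intEmbed '' (V : Set (Fin d → ℤ)))

/-- A lattice tetrahedron: the convex hull of 4 affinely independent lattice points in `ℝ³`. -/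
def IsLatticeTetrahedron (P : Set (Fin 3 → ℝ)) : Prop :=
  ∃ v : Fin 4 → (Fin 3 → ℤ), AffineIndependent ℝ (fun i => intEmbed (v i)) ∧
    P = convexHull ℝ (Set.range fun i => intEmbed (v i))

/-- The type of affine equivalence classes of lattice tetrahedra with multi-width `w`. -/
def TetClasses (w : Fin 3 → ℝ) : Type :=
  Quot fun P Q : {P : Set (Fin 3 → ℝ) // IsLatticeTetrahedron P ∧ IsMultiWidth P w} =>
    AffEquiv P.1 Q.1

/-- The real points of a multiset of lattice points. -/
def msetPts {d : ℕ} (S : Multiset (Fin d → ℤ)) : Set (Fin d → ℝ) :=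
  intEmbed '' {v | v ∈ S}

/-- The convex hull of a multiset of lattice points. -/
def msetHull {d : ℕ} (S : Multiset (Fin d → ℤ)) : Set (Fin d → ℝ) :=
  convexHull ℝ (msetPts S)

/-- Affine unimodular equivalence of multisets of lattice points. -/
def MsetEquiv {d : ℕ} (S T : Multiset (Fin d → ℤ)) : Prop :=
  ∃ A : Matrix (Fin d) (Fin d) ℤ, IsUnit A.det ∧ ∃ b : Fin d → ℤ,
    S.map (fun v => A.mulVec v + b) = T

/-- Affine unimodular equivalence of multisets of integers (`d = 1`). -/
def MsetEquivZ (S T : Multiset ℤ) : Prop :=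
  ∃ a : ℤ, IsUnit a ∧ ∃ b : ℤ, S.map (fun x => a * x + b) = T

/-- The width of a multiset of integers (the width of its convex hull). -/
def widthZ (S : Multiset ℤ) : ℝ :=
  sSup ((fun n : ℤ => (n : ℝ)) '' {n | n ∈ S}) - sInf ((fun n : ℤ => (n : ℝ)) '' {n | n ∈ S})

/-- `S` has a dual vector `u` of width `w1` whose image multiset `u·S` is affine
equivalent in `ℤ` to the multiset `L`. -/
def HasLineType (w1 : ℤ) (L : Multiset ℤ) (S : Multiset (Fin 2 → ℤ)) : Prop :=
  ∃ u : Fin 2 → ℤ, widthIn u (msetHull S) = (w1 : ℝ) ∧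
    MsetEquivZ (S.map fun v => ∑ i, u i * v i) L

/-- The set `S_{w₂,w₃}` of normal-form lattice triangles of multi-width `(w₂, w₃)`. -/
def TriNormalForms (w2 w3 : ℤ) : Set (Set (Fin 2 → ℝ)) :=
  {t | (∃ y1 : ℤ, 0 ≤ y1 ∧ y1 ≤ (w3 - y1) % w2 ∧
          t = convexHull ℝ ({![0, 0], ![(w2 : ℝ), (y1 : ℝ)], ![0, (w3 : ℝ)]} :
            Set (Fin 2 → ℝ))) ∨
       (∃ x2 y1 : ℤ, 0 < x2 ∧ 2 * x2 ≤ w2 ∧ 0 ≤ y1 ∧ y1 ≤ w2 - x2 ∧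
          (w2 = w3 → x2 ≤ y1) ∧
          t = convexHull ℝ ({![0, 0], ![(w2 : ℝ), (y1 : ℝ)], ![(x2 : ℝ), (w3 : ℝ)]} :
            Set (Fin 2 → ℝ))) ∨
       (∃ x2 y0 : ℤ, 1 < x2 ∧ 2 * x2 < w2 ∧ 0 < y0 ∧ y0 < x2 ∧ w2 < w3 ∧
          t = convexHull ℝ ({![0, (y0 : ℝ)], ![(w2 : ℝ), 0], ![(x2 : ℝ), (w3 : ℝ)]} :
            Set (Fin 2 → ℝ)))}

/-- The set `S_{1,w₂,w₃}` of normal-form lattice tetrahedra of multi-width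
`(1, w₂, w₃)`, for `w₃ ≥ w₂ > 1`. -/
def TetNormalForms (w2 w3 : ℤ) : Set (Set (Fin 3 → ℝ)) :=
  {T | (∃ t ∈ TriNormalForms w2 w3,
          T = convexHull ℝ (((fun p : Fin 2 → ℝ => ![0, p 0, p 1]) '' t) ∪
            {![1, 0, 0]})) ∨
       (∃ z1 : ℤ, 0 ≤ z1 ∧ 2 * z1 ≤ w2 ∧
          T = convexHull ℝ ({![0, 0, 0], ![0, (w2 : ℝ), (z1 : ℝ)], ![1, 0, 0],
            ![1, 0, (w3 : ℝ)]} : Set (Fin 3 → ℝ))) ∨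
       (∃ y1 z1 : ℤ, 0 < y1 ∧ y1 ≤ w2 ∧ w3 - w2 ≤ z1 ∧ z1 ≤ w3 ∧
          (w3 = w2 → y1 ≤ z1) ∧
          T = convexHull ℝ ({![0, 0, 0], ![0, (w2 : ℝ), (z1 : ℝ)], ![1, 0, (w3 : ℝ)],
            ![1, (y1 : ℝ), 0]} : Set (Fin 3 → ℝ))) ∨
       (∃ y1 z1 : ℤ, 0 < z1 ∧ z1 < y1 ∧ y1 < w2 ∧ (w3 = w2 → z1 ≤ w2 - y1) ∧
          T = convexHull ℝ ({![0, 0, 0], ![0, (w2 : ℝ), (w3 : ℝ)], ![1, 0, (w3 : ℝ)],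
            ![1, (y1 : ℝ), (z1 : ℝ)]} : Set (Fin 3 → ℝ)))}

/-!
The standard dual basis realises the widths `(1, w₂, w₃)` for each tetrahedron. For
minimality, a dual vector that does not vanish on the `yz`-plane has width at least `w₂ > 1`,
so a width tuple starting with `1` starts with a multiple of `e₁*`; the other two dual vectors
then restrict to independent functionals on the `yz`-plane, and the whole question is that such
a pair has widths lexicographically at least `(w₂, w₃)`. For the pyramid over a triangle `t`
this holds because `t` sits inside the tetrahedron and has multi-width `(w₂, w₃)`. For the
three other families it follows from explicit vertex differences: every dual vector with
`u₃ ≠ 0` has width at least `w₃`, and one with `u₃ = 0 ≠ u₂` has width at least `w₂`.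
-/

section Width

variable {d : ℕ}

lemma isLinearMap_dualPair (u : Fin d → ℤ) : IsLinearMap ℝ (dualPair u) :=
  ⟨fun x y => by simp [dualPair, mul_add, Finset.sum_add_distrib],
    fun c x => by simp [dualPair, Finset.mul_sum, mul_left_comm]⟩

lemma continuous_dualPair (u : Fin d → ℤ) : Continuous (dualPair u) := by
  unfold dualPair; fun_prop

lemma dualPair_intEmbed (u v : Fin d → ℤ) : dualPair u (intEmbed v) = ((u ⬝ᵥ v : ℤ) : ℝ) := by
  simp [dualPair, intEmbed, dotProduct]

lemma intEmbed_cons (a : ℤ) (v : Fin d → ℤ) :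
    intEmbed (Matrix.vecCons a v) = Matrix.vecCons (a : ℝ) (intEmbed v) := by
  ext i; cases i using Fin.cases <;> rfl

@[simp]
lemma intEmbed_empty : intEmbed ![] = ![] := Subsingleton.elim _ _

lemma widthIn_image {e : ℕ} {g : (Fin e → ℝ) → Fin d → ℝ} {u : Fin d → ℤ} {v : Fin e → ℤ}
    (h : ∀ x, dualPair u (g x) = dualPair v x) (s : Set (Fin e → ℝ)) :
    widthIn u (g '' s) = widthIn v s := by
  simp only [widthIn, Set.image_image, h]

lemma widthIn_mono {u : Fin d → ℤ} {s t : Set (Fin d → ℝ)} (hst : s ⊆ t) (hs : s.Nonempty)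
    (ht : IsCompact t) : widthIn u s ≤ widthIn u t := by
  have hbdd := ht.image (continuous_dualPair u)
  exact sub_le_sub (csSup_le_csSup hbdd.bddAbove (hs.image _) (Set.image_mono hst))
    (csInf_le_csInf hbdd.bddBelow (hs.image _) (Set.image_mono hst))

lemma abs_sub_le_widthIn {u : Fin d → ℤ} {t : Set (Fin d → ℝ)} (ht : IsCompact t) {x y}
    (hx : x ∈ t) (hy : y ∈ t) : |dualPair u x - dualPair u y| ≤ widthIn u t := by
  have hbdd := ht.image (continuous_dualPair u)
  have hle : ∀ {a b}, a ∈ t → b ∈ t → dualPair u a - dualPair u b ≤ widthIn u t :=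
    fun ha hb => sub_le_sub (le_csSup hbdd.bddAbove (Set.mem_image_of_mem _ ha))
      (csInf_le hbdd.bddBelow (Set.mem_image_of_mem _ hb))
  exact abs_sub_le_iff.2 ⟨hle hx hy, hle hy hx⟩

end Width

lemma Set.Finite.csSup_convexHull {s : Set ℝ} (hs : s.Finite) (hne : s.Nonempty) :
    sSup (convexHull ℝ s) = sSup s :=
  IsGreatest.csSup_eq ⟨subset_convexHull ℝ s (hne.csSup_mem hs),
    mem_upperBounds.1 <| convexHull_min (fun _ hx => le_csSup hs.bddAbove hx) (convex_Iic _)⟩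

lemma Set.Finite.csInf_convexHull {s : Set ℝ} (hs : s.Finite) (hne : s.Nonempty) :
    sInf (convexHull ℝ s) = sInf s :=
  IsLeast.csInf_eq ⟨subset_convexHull ℝ s (hne.csInf_mem hs),
    mem_lowerBounds.1 <| convexHull_min (fun _ hx => csInf_le hs.bddBelow hx) (convex_Ici _)⟩

section LatticeHull

variable {d : ℕ}

def latticeHull (V : Finset (Fin d → ℤ)) : Set (Fin d → ℝ) :=
  convexHull ℝ (intEmbed '' V)

lemma isCompact_latticeHull (V : Finset (Fin d → ℤ)) : IsCompact (latticeHull V) :=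
  ((V.finite_toSet).image _).isCompact_convexHull ℝ

lemma widthIn_latticeHull (u : Fin d → ℤ) {V : Finset (Fin d → ℤ)} (hV : V.Nonempty) :
    widthIn u (latticeHull V) = ((V.sup' hV (u ⬝ᵥ ·) - V.inf' hV (u ⬝ᵥ ·) : ℤ) : ℝ) := by
  have hfin : (dualPair u '' (intEmbed '' V)).Finite := (V.finite_toSet.image _).image _
  have hne : (dualPair u '' (intEmbed '' V)).Nonempty := (hV.to_set.image _).image _
  rw [widthIn, latticeHull, (isLinearMap_dualPair u).image_convexHull,
    hfin.csSup_convexHull hne, hfin.csInf_convexHull hne, Set.image_image]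
  simp only [dualPair_intEmbed]
  rw [← Finset.sup'_eq_csSup_image _ hV, ← Finset.inf'_eq_csInf_image _ hV, Int.cast_sub,
    Finset.apply_sup'_eq_sup'_comp hV _ fun _ _ => Int.cast_max,
    Finset.apply_inf'_eq_inf'_comp hV _ fun _ _ => Int.cast_min]
  rfl

lemma le_widthIn_latticeHull {V : Finset (Fin d → ℤ)} {a b : Fin d → ℤ} (ha : a ∈ V)
    (hb : b ∈ V) {u : Fin d → ℤ} {k : ℤ} (h : k ≤ |u ⬝ᵥ a - u ⬝ᵥ b|) :
    (k : ℝ) ≤ widthIn u (latticeHull V) := by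
  have hmem : ∀ {v}, v ∈ V → intEmbed v ∈ latticeHull V :=
    fun hv => subset_convexHull ℝ _ (Set.mem_image_of_mem _ hv)
  have := abs_sub_le_widthIn (u := u) (isCompact_latticeHull V) (hmem ha) (hmem hb)
  rw [dualPair_intEmbed, dualPair_intEmbed, ← Int.cast_sub, ← Int.cast_abs] at this
  exact (Int.cast_le.2 h).trans this

end LatticeHull

section Lex

variable {α : Type*} [PartialOrder α] {n : ℕ} {x y : Fin (n + 1) → α}

lemma toLex_le_toLex_iff_head_tail :
    toLex x ≤ toLex y ↔ x 0 < y 0 ∨ x 0 = y 0 ∧ toLex (Fin.tail x) ≤ toLex (Fin.tail y) := by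
  simp only [le_iff_lt_or_eq, toLex_inj]
  constructor
  · rintro (⟨i, hlt, hi⟩ | rfl)
    · cases i using Fin.cases with
      | zero => exact Or.inl hi
      | succ k =>
        exact Or.inr ⟨hlt 0 k.succ_pos,
          Or.inl ⟨k, fun j hj => hlt j.succ (Fin.succ_lt_succ_iff.2 hj), hi⟩⟩
    · exact Or.inr ⟨rfl, Or.inr rfl⟩
  · rintro (h | ⟨h0, ⟨k, hlt, hk⟩ | htail⟩)
    · exact Or.inl ⟨0, fun j hj => absurd hj (Fin.not_lt_zero j), h⟩
    · refine Or.inl ⟨k.succ, fun j hj => ?_, hk⟩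
      cases j using Fin.cases with
      | zero => exact h0
      | succ j => exact hlt j (Fin.succ_lt_succ_iff.1 hj)
    · right
      rw [← Fin.cons_self_tail x, ← Fin.cons_self_tail y, h0, htail]

lemma head_le_of_toLex_le (h : toLex x ≤ toLex y) : x 0 ≤ y 0 := by
  rcases toLex_le_toLex_iff_head_tail.1 h with h | h
  exacts [h.le, h.1.le]

lemma toLex_le_of_head_lt (h : x 0 < y 0) : toLex x ≤ toLex y :=
  toLex_le_toLex_iff_head_tail.2 (Or.inl h)

lemma toLex_le_of_head_eq (h0 : x 0 = y 0) (h : toLex (Fin.tail x) ≤ toLex (Fin.tail y)) :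
    toLex x ≤ toLex y :=
  toLex_le_toLex_iff_head_tail.2 (Or.inr ⟨h0, h⟩)

end Lex

lemma Matrix.det_ne_zero_of_linearIndependent_rows {m R : Type*} [Fintype m] [DecidableEq m]
    [CommRing R] [IsDomain R] {A : Matrix m m R} (hA : LinearIndependent R fun i => A i) :
    A.det ≠ 0 := by
  set K := FractionRing R
  have hK := (linearIndependent_algebraMap_comp_iff (S := K)).2 hA
  have hunit : IsUnit (A.map (algebraMap R K)) := Matrix.linearIndependent_rows_iff_isUnit.1 hK
  rw [Matrix.isUnit_iff_isUnit_det, isUnit_iff_ne_zero, ← RingHom.mapMatrix_apply,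
    ← RingHom.map_det] at hunit
  exact fun h => hunit (by rw [h, map_zero])

/-- `u 1 * u' 2 - u 2 * u' 1 ≠ 0` says that `u` and `u'` are independent modulo `e₁*`. -/
def TransverseWidthBound (T : Set (Fin 3 → ℝ)) (w2 w3 : ℝ) : Prop :=
  ∀ u u' : Fin 3 → ℤ, u 1 * u' 2 - u 2 * u' 1 ≠ 0 →
    toLex ![w2, w3] ≤ toLex ![widthIn u T, widthIn u' T]

def yzEmbed (p : Fin 2 → ℝ) : Fin 3 → ℝ := ![0, p 0, p 1]

section Transverse

variable {T : Set (Fin 3 → ℝ)} {w2 w3 : ℝ}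

lemma TransverseWidthBound.le_widthIn (h : TransverseWidthBound T w2 w3) {u : Fin 3 → ℤ}
    (hu : u 1 ≠ 0 ∨ u 2 ≠ 0) : w2 ≤ widthIn u T := by
  refine head_le_of_toLex_le (h u ![0, -u 2, u 1] ?_)
  simp only [Matrix.cons_val]
  rcases hu with hu | hu <;>
    nlinarith [mul_self_pos.2 hu, mul_self_nonneg (u 1), mul_self_nonneg (u 2)]

theorem isMultiWidth_of_transverseWidthBound (hw2 : 1 < w2)
    (hbasis : ∀ i, widthIn (Pi.single i 1) T = ![1, w2, w3] i)
    (hfirst : ∀ u : Fin 3 → ℤ, u 1 = 0 → u 2 = 0 → ((|u 0| : ℤ) : ℝ) ≤ widthIn u T)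
    (htrans : TransverseWidthBound T w2 w3) : IsMultiWidth T ![1, w2, w3] := by
  refine ⟨⟨fun i => Pi.single i 1, Pi.linearIndependent_single_one _ _, hbasis⟩, ?_⟩
  rintro w' ⟨u, hu, hw'⟩
  obtain rfl : w' = fun i => widthIn (u i) T := funext fun i => (hw' i).symm
  by_cases h0 : u 0 1 = 0 ∧ u 0 2 = 0
  · have hdet : u 0 0 * (u 1 1 * u 2 2 - u 1 2 * u 2 1) ≠ 0 := by
      have := Matrix.det_ne_zero_of_linearIndependent_rows (A := Matrix.of u) hu
      simp only [Matrix.det_fin_three, Matrix.of_apply, h0.1, h0.2] at this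
      convert this using 1; ring
    have h1 : (1 : ℝ) ≤ widthIn (u 0) T :=
      le_trans (by exact_mod_cast Int.one_le_abs (left_ne_zero_of_mul hdet)) (hfirst _ h0.1 h0.2)
    rcases h1.lt_or_eq with h1 | h1
    · exact toLex_le_of_head_lt h1
    · have htail :
          Fin.tail (fun i => widthIn (u i) T) = ![widthIn (u 1) T, widthIn (u 2) T] := by
        ext i; fin_cases i <;> rfl
      exact toLex_le_of_head_eq h1 (htail ▸ htrans (u 1) (u 2) (right_ne_zero_of_mul hdet))
  · refine toLex_le_of_head_lt (hw2.trans_le (htrans.le_widthIn ?_))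
    tauto

lemma transverseWidthBound_of_axis_bounds (hw23 : w2 ≤ w3)
    (h3 : ∀ u : Fin 3 → ℤ, u 2 ≠ 0 → w3 ≤ widthIn u T)
    (h2 : ∀ u : Fin 3 → ℤ, u 2 = 0 → u 1 ≠ 0 → w2 ≤ widthIn u T) :
    TransverseWidthBound T w2 w3 := by
  intro u u' hcross
  by_cases hu' : u' 2 = 0
  · have hu2 : u 2 ≠ 0 := fun h => hcross (by rw [h, hu']; ring)
    have hu'1 : u' 1 ≠ 0 := fun h => hcross (by rw [h, hu']; ring)
    rcases (hw23.trans (h3 u hu2)).lt_or_eq with hlt | heq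
    · exact toLex_le_of_head_lt hlt
    · have hw : w3 = w2 := le_antisymm (heq ▸ h3 u hu2) hw23
      exact Pi.toLex_monotone fun i => by
        fin_cases i
        exacts [heq.le, hw ▸ h2 u' hu' hu'1]
  · have hu : w2 ≤ widthIn u T := by
      by_cases hu2 : u 2 = 0
      · exact h2 u hu2 fun h => hcross (by rw [h, hu2]; ring)
      · exact hw23.trans (h3 u hu2)
    exact Pi.toLex_monotone fun i => by
      fin_cases i
      exacts [hu, h3 u' hu']

lemma transverseWidthBound_of_image_subset {t : Set (Fin 2 → ℝ)}
    (ht : IsMultiWidth t ![w2, w3]) (htne : t.Nonempty) (hT : IsCompact T)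
    (hsub : yzEmbed '' t ⊆ T) : TransverseWidthBound T w2 w3 := by
  have hproj (v : Fin 3 → ℤ) : widthIn ![v 1, v 2] t ≤ widthIn v T := by
    rw [← widthIn_image (g := yzEmbed) (u := v)
      (fun p => by simp [yzEmbed, dualPair, Fin.sum_univ_succ]) t]
    exact widthIn_mono hsub (htne.image _) hT
  intro u u' hcross
  have hind : LinearIndependent ℤ ![![u 1, u 2], ![u' 1, u' 2]] :=
    Matrix.linearIndependent_rows_of_det_ne_zero (A := Matrix.of ![![u 1, u 2], ![u' 1, u' 2]])
      (by simpa [Matrix.det_fin_two] using hcross)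
  calc toLex ![w2, w3]
      ≤ toLex ![widthIn ![u 1, u 2] t, widthIn ![u' 1, u' 2] t] :=
        ht.2 _ ⟨_, hind, fun i => by fin_cases i <;> rfl⟩
    _ ≤ toLex ![widthIn u T, widthIn u' T] := Pi.toLex_monotone fun i => by
        fin_cases i
        exacts [hproj u, hproj u']

end Transverse

lemma abs_le_widthIn_latticeHull {V : Finset (Fin 3 → ℤ)} {a b : Fin 3 → ℤ} (ha : a ∈ V)
    (hb : b ∈ V) (hab : a 0 - b 0 = 1) {u : Fin 3 → ℤ} (hu1 : u 1 = 0) (hu2 : u 2 = 0) :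
    ((|u 0| : ℤ) : ℝ) ≤ widthIn u (latticeHull V) := by
  refine le_widthIn_latticeHull ha hb (le_of_eq ?_)
  simp only [dotProduct, Fin.sum_univ_three, hu1, hu2, zero_mul, add_zero]
  rw [← mul_sub, hab, mul_one]

def pyramid (t : Set (Fin 2 → ℝ)) : Set (Fin 3 → ℝ) :=
  convexHull ℝ (yzEmbed '' t ∪ {![1, 0, 0]})

lemma pyramid_latticeHull (V : Finset (Fin 2 → ℤ)) :
    pyramid (latticeHull V) =
      latticeHull (insert ![1, 0, 0] (V.image fun v => ![0, v 0, v 1])) := by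
  have hlin : IsLinearMap ℝ yzEmbed :=
    ⟨fun x y => by ext i; fin_cases i <;> simp [yzEmbed],
      fun c x => by ext i; fin_cases i <;> simp [yzEmbed]⟩
  rw [pyramid, latticeHull, hlin.image_convexHull, convexHull_convexHull_union_left, latticeHull,
    Finset.coe_insert, Finset.coe_image, Set.image_insert_eq, Set.image_image, Set.image_image,
    Set.union_singleton]
  simp [yzEmbed, intEmbed_cons, intEmbed]

lemma isMultiWidth_pyramid {w2 w3 : ℝ} (hw2 : 1 < w2) {V : Finset (Fin 2 → ℤ)} (hV : V.Nonempty)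
    (ht : IsMultiWidth (latticeHull V) ![w2, w3])
    (hbasis : ∀ i, widthIn (Pi.single i 1) (pyramid (latticeHull V)) = ![1, w2, w3] i) :
    IsMultiWidth (pyramid (latticeHull V)) ![1, w2, w3] := by
  obtain ⟨v, hv⟩ := hV
  refine isMultiWidth_of_transverseWidthBound hw2 hbasis (fun u => ?_) ?_
  · rw [pyramid_latticeHull]
    exact abs_le_widthIn_latticeHull (Finset.mem_insert_self _ _)
      (Finset.mem_insert_of_mem (Finset.mem_image_of_mem _ hv)) (by simp)
  · refine transverseWidthBound_of_image_subset ht ?_ ?_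
      (Set.subset_union_left.trans (subset_convexHull ℝ _))
    · exact ⟨_, subset_convexHull ℝ _ (Set.mem_image_of_mem _ hv)⟩
    · rw [pyramid_latticeHull]
      exact isCompact_latticeHull _

lemma isMultiWidth_pyramid_of_mem_triNormalForms {w2 w3 : ℤ} (hw2 : 1 < w2) (hw23 : w2 ≤ w3)
    {t : Set (Fin 2 → ℝ)} (ht : t ∈ TriNormalForms w2 w3)
    (htm : IsMultiWidth t ![(w2 : ℝ), (w3 : ℝ)]) :
    IsMultiWidth (pyramid t) ![1, (w2 : ℝ), (w3 : ℝ)] := by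
  rcases ht with ⟨y1, hy0, hy, rfl⟩ | ⟨x2, y1, hx0, hx2, hy0, hy, -, rfl⟩ |
    ⟨x2, y0, hx1, hx2, hy0, hyx, -, rfl⟩
  case' inl =>
    have hmod := Int.emod_lt_of_pos (w3 - y1) (by omega : 0 < w2)
    rw [show convexHull ℝ ({![0, 0], ![(w2 : ℝ), (y1 : ℝ)], ![0, (w3 : ℝ)]} : Set (Fin 2 → ℝ)) =
      latticeHull {![0, 0], ![w2, y1], ![0, w3]} by
      simp [latticeHull, Set.image_insert_eq, intEmbed_cons]] at htm ⊢
  case' inr.inl =>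
    rw [show convexHull ℝ ({![0, 0], ![(w2 : ℝ), (y1 : ℝ)], ![(x2 : ℝ), (w3 : ℝ)]} :
      Set (Fin 2 → ℝ)) = latticeHull {![0, 0], ![w2, y1], ![x2, w3]} by
      simp [latticeHull, Set.image_insert_eq, intEmbed_cons]] at htm ⊢
  case' inr.inr =>
    rw [show convexHull ℝ ({![0, (y0 : ℝ)], ![(w2 : ℝ), 0], ![(x2 : ℝ), (w3 : ℝ)]} :
      Set (Fin 2 → ℝ)) = latticeHull {![0, y0], ![w2, 0], ![x2, w3]} by
      simp [latticeHull, Set.image_insert_eq, intEmbed_cons]] at htm ⊢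
  all_goals
    refine isMultiWidth_pyramid (by exact_mod_cast hw2) (by simp) htm fun i => ?_
    rw [pyramid_latticeHull]
    fin_cases i <;> simp [widthIn_latticeHull, Finset.sup'_insert, Finset.inf'_insert]
    all_goals norm_cast; omega

lemma Int.le_abs_mul_of_ne_zero {r w : ℤ} (hr : r ≠ 0) (hw : 0 ≤ w) : w ≤ |r * w| := by
  rw [abs_mul, abs_of_nonneg hw]
  exact le_mul_of_one_le_left hw (Int.one_le_abs hr)

/- In `le_max_abs_case3` and `le_max_abs_case4`, `q` and `r` stand for `u 1` and `u 2`, and the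
two absolute values are `|u ⬝ᵥ (A - O)|` and `|u ⬝ᵥ (B - C)|` for the vertices `O, A, B, C` of
the third, resp. fourth, family of `TetNormalForms`. -/
lemma le_max_abs_case3 {w2 w3 y1 z1 q r : ℤ} (hy : 0 < y1) (hyw : y1 ≤ w2) (hw23 : w2 ≤ w3)
    (hz : w3 - w2 ≤ z1) (hr : r ≠ 0) : w3 ≤ max |q * w2 + r * z1| |r * w3 - q * y1| := by
  wlog hr0 : 0 < r generalizing q r
  · convert this (q := -q) (neg_ne_zero.2 hr) (by omega) using 2 <;> rw [← abs_neg] <;> ring_nf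
  rcases le_or_gt q 0 with hq | hq
  · exact le_max_of_le_right (le_abs.2 (Or.inl (by nlinarith)))
  · exact le_max_of_le_left (le_abs.2 (Or.inl (by nlinarith)))

lemma le_max_abs_case4 {w2 w3 y1 z1 q r : ℤ} (hz : 0 < z1) (hzy : z1 < y1) (hyw : y1 < w2)
    (hw23 : w2 ≤ w3) (hr : r ≠ 0) : w3 ≤ max |q * w2 + r * w3| |r * w3 - q * y1 - r * z1| := by
  wlog hr0 : 0 < r generalizing q r
  · convert this (q := -q) (neg_ne_zero.2 hr) (by omega) using 2 <;> rw [← abs_neg] <;> ring_nf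
  rcases le_or_gt 0 q with hq | hq
  · exact le_max_of_le_left (le_abs.2 (Or.inl (by nlinarith)))
  · exact le_max_of_le_right (le_abs.2 (Or.inl (by nlinarith)))

lemma le_widthIn_latticeHull_of_axis {V : Finset (Fin 3 → ℤ)} {w c : ℤ} (hO : ![0, 0, 0] ∈ V)
    (hA : ![0, w, c] ∈ V) (hw : 0 ≤ w) {u : Fin 3 → ℤ} (hu2 : u 2 = 0) (hu1 : u 1 ≠ 0) :
    (w : ℝ) ≤ widthIn u (latticeHull V) :=
  le_widthIn_latticeHull hA hO
    (by simpa [dotProduct, Fin.sum_univ_three, hu2] using Int.le_abs_mul_of_ne_zero hu1 hw)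

lemma isMultiWidth_latticeHull_of_axis_bound {w2 w3 c p q : ℤ} (hw2 : 1 < w2) (hw23 : w2 ≤ w3)
    {V : Finset (Fin 3 → ℤ)} (hO : ![0, 0, 0] ∈ V) (hA : ![0, w2, c] ∈ V) (hE : ![1, p, q] ∈ V)
    (hbasis : ∀ i, widthIn (Pi.single i 1) (latticeHull V) = ![1, (w2 : ℝ), (w3 : ℝ)] i)
    (h3 : ∀ u : Fin 3 → ℤ, u 2 ≠ 0 → (w3 : ℝ) ≤ widthIn u (latticeHull V)) :
    IsMultiWidth (latticeHull V) ![1, (w2 : ℝ), (w3 : ℝ)] :=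
  isMultiWidth_of_transverseWidthBound (by exact_mod_cast hw2) hbasis
    (fun _ => abs_le_widthIn_latticeHull hE hO (by simp))
    (transverseWidthBound_of_axis_bounds (by exact_mod_cast hw23) h3
      fun _ => le_widthIn_latticeHull_of_axis hO hA (by omega))

lemma isMultiWidth_tetNormalForm2 {w2 w3 z1 : ℤ} (hw2 : 1 < w2) (hw23 : w2 ≤ w3) (hz0 : 0 ≤ z1)
    (hz : 2 * z1 ≤ w2) :
    IsMultiWidth (convexHull ℝ ({![0, 0, 0], ![0, (w2 : ℝ), (z1 : ℝ)], ![1, 0, 0],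
      ![1, 0, (w3 : ℝ)]} : Set (Fin 3 → ℝ))) ![1, (w2 : ℝ), (w3 : ℝ)] := by
  rw [show convexHull ℝ ({![0, 0, 0], ![0, (w2 : ℝ), (z1 : ℝ)], ![1, 0, 0], ![1, 0, (w3 : ℝ)]} :
      Set (Fin 3 → ℝ)) = latticeHull {![0, 0, 0], ![0, w2, z1], ![1, 0, 0], ![1, 0, w3]} by
    simp [latticeHull, Set.image_insert_eq, intEmbed_cons]]
  refine isMultiWidth_latticeHull_of_axis_bound (c := z1) (p := 0) (q := 0) hw2 hw23
    (by simp) (by simp) (by simp) (fun i => ?_) fun u hu => ?_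
  · fin_cases i <;> simp [widthIn_latticeHull, Finset.sup'_insert, Finset.inf'_insert]
    all_goals norm_cast; omega
  · refine le_widthIn_latticeHull (a := ![1, 0, w3]) (b := ![1, 0, 0]) (by simp) (by simp) ?_
    simpa [dotProduct, Fin.sum_univ_three] using Int.le_abs_mul_of_ne_zero hu (by omega : 0 ≤ w3)

lemma isMultiWidth_tetNormalForm3 {w2 w3 y1 z1 : ℤ} (hw2 : 1 < w2) (hw23 : w2 ≤ w3)
    (hy : 0 < y1) (hyw : y1 ≤ w2) (hz : w3 - w2 ≤ z1) (hzw : z1 ≤ w3) :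
    IsMultiWidth (convexHull ℝ ({![0, 0, 0], ![0, (w2 : ℝ), (z1 : ℝ)], ![1, 0, (w3 : ℝ)],
      ![1, (y1 : ℝ), 0]} : Set (Fin 3 → ℝ))) ![1, (w2 : ℝ), (w3 : ℝ)] := by
  rw [show convexHull ℝ ({![0, 0, 0], ![0, (w2 : ℝ), (z1 : ℝ)], ![1, 0, (w3 : ℝ)],
      ![1, (y1 : ℝ), 0]} : Set (Fin 3 → ℝ)) =
      latticeHull {![0, 0, 0], ![0, w2, z1], ![1, 0, w3], ![1, y1, 0]} by
    simp [latticeHull, Set.image_insert_eq, intEmbed_cons]]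
  refine isMultiWidth_latticeHull_of_axis_bound (c := z1) (p := 0) (q := w3) hw2 hw23
    (by simp) (by simp) (by simp) (fun i => ?_) fun u hu => ?_
  · fin_cases i <;> simp [widthIn_latticeHull, Finset.sup'_insert, Finset.inf'_insert]
    all_goals norm_cast; omega
  · rcases le_max_iff.1 (le_max_abs_case3 (q := u 1) hy hyw hw23 hz hu) with h | h
    · exact le_widthIn_latticeHull (a := ![0, w2, z1]) (b := ![0, 0, 0]) (by simp) (by simp)
        (by simpa [dotProduct, Fin.sum_univ_three] using h)
    · exact le_widthIn_latticeHull (a := ![1, 0, w3]) (b := ![1, y1, 0]) (by simp) (by simp)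
        (by simpa [dotProduct, Fin.sum_univ_three] using h)

lemma isMultiWidth_tetNormalForm4 {w2 w3 y1 z1 : ℤ} (hw2 : 1 < w2) (hw23 : w2 ≤ w3)
    (hz : 0 < z1) (hzy : z1 < y1) (hyw : y1 < w2) :
    IsMultiWidth (convexHull ℝ ({![0, 0, 0], ![0, (w2 : ℝ), (w3 : ℝ)], ![1, 0, (w3 : ℝ)],
      ![1, (y1 : ℝ), (z1 : ℝ)]} : Set (Fin 3 → ℝ))) ![1, (w2 : ℝ), (w3 : ℝ)] := by
  rw [show convexHull ℝ ({![0, 0, 0], ![0, (w2 : ℝ), (w3 : ℝ)], ![1, 0, (w3 : ℝ)],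
      ![1, (y1 : ℝ), (z1 : ℝ)]} : Set (Fin 3 → ℝ)) =
      latticeHull {![0, 0, 0], ![0, w2, w3], ![1, 0, w3], ![1, y1, z1]} by
    simp [latticeHull, Set.image_insert_eq, intEmbed_cons]]
  refine isMultiWidth_latticeHull_of_axis_bound (c := w3) (p := 0) (q := w3) hw2 hw23
    (by simp) (by simp) (by simp) (fun i => ?_) fun u hu => ?_
  · fin_cases i <;> simp [widthIn_latticeHull, Finset.sup'_insert, Finset.inf'_insert]
    all_goals norm_cast; omega
  · rcases le_max_iff.1 (le_max_abs_case4 (q := u 1) hz hzy hyw hw23 hu) with h | h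
    · exact le_widthIn_latticeHull (a := ![0, w2, w3]) (b := ![0, 0, 0]) (by simp) (by simp)
        (by simpa [dotProduct, Fin.sum_univ_three] using h)
    · refine le_widthIn_latticeHull (a := ![1, 0, w3]) (b := ![1, y1, z1]) (by simp) (by simp) ?_
      have hdot : u ⬝ᵥ ![1, 0, w3] - u ⬝ᵥ ![1, y1, z1] = u 2 * w3 - u 1 * y1 - u 2 * z1 := by
        simp [dotProduct, Fin.sum_univ_three]
        ring
      rwa [hdot]

/-- Every tetrahedron in `S_{1,w₂,w₃}`, `w₃ ≥ w₂ > 1`, has multi-width exactly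
`(1, w₂, w₃)`.  (One may assume every triangle in `S_{w₂,w₃}` has multi-width
`(w₂, w₃)`.) -/
theorem tetrahedron_normal_form_multiwidth (w2 w3 : ℤ) (hw2 : 1 < w2) (hw23 : w2 ≤ w3)
    (htri : ∀ t ∈ TriNormalForms w2 w3, IsMultiWidth t ![(w2 : ℝ), (w3 : ℝ)])
    (T : Set (Fin 3 → ℝ)) (hT : T ∈ TetNormalForms w2 w3) :
    IsMultiWidth T ![1, (w2 : ℝ), (w3 : ℝ)] := by
  rcases hT with ⟨t, ht, rfl⟩ | ⟨z1, hz0, hz, rfl⟩ | ⟨y1, z1, hy, hyw, hz, hzw, -, rfl⟩ |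
    ⟨y1, z1, hz, hzy, hyw, -, rfl⟩
  · exact isMultiWidth_pyramid_of_mem_triNormalForms hw2 hw23 ht (htri t ht)
  · exact isMultiWidth_tetNormalForm2 hw2 hw23 hz0 hz
  · exact isMultiWidth_tetNormalForm3 hw2 hw23 hy hyw hz hzw
  · exact isMultiWidth_tetNormalForm4 hw2 hw23 hz hzy hyw
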